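/- Let A be a compliant Banach algebra and let □ denote the first Arens product on the bidual A″. Then the image of A in A″ is a two-sided ideal of (A″, □). -/

import Mathlib

open MultiplierAlgebra

variable {A : Type*} [NonUnitalNormedRing A] [NormedSpace ℂ A]
  [SMulCommClass ℂ A A] [IsScalarTower ℂ A A] [CompleteSpace A]

/-- The map `f ↦ (a ↦ f · a)` where `(f · a)(b) = f (a * b)`, bundled as a continuous linear
map `A′ → (A →L A′)`. -/
noncomputable def fDot (A : Type*) [NonUnitalNormedRing A] [NormedSpace ℂ A]
    [SMulCommClass ℂ A A] [IsScalarTower ℂ A A] :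
    StrongDual ℂ A →L[ℂ] (A →L[ℂ] StrongDual ℂ A) :=
  (((ContinuousLinearMap.compL ℂ A (A →L[ℂ] A) (A →L[ℂ] ℂ)).flip
      (ContinuousLinearMap.mul ℂ A)).comp
    (ContinuousLinearMap.compL ℂ A A ℂ))

/-- The first Arens product on the bidual `A″`:
`(Φ □ Ψ)(f) = Φ(Ψ · f)` where `(Ψ · f)(a) = Ψ(f · a)` and `(f · a)(b) = f (a b)`. -/
noncomputable def arensMul (A : Type*) [NonUnitalNormedRing A] [NormedSpace ℂ A]
    [SMulCommClass ℂ A A] [IsScalarTower ℂ A A]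
    (Φ Ψ : StrongDual ℂ (StrongDual ℂ A)) :
    StrongDual ℂ (StrongDual ℂ A) :=
  Φ.comp ((ContinuousLinearMap.compL ℂ A (StrongDual ℂ A) ℂ Ψ).comp (fDot A))

/-! If `μ ↦ μ.snd a` is weak*-to-weak continuous on `M(A) ≅ X′`, then for each `f ∈ A′` the
functional `μ ↦ f (μ.snd a)` is evaluation at a point `x_f` of the predual `X`. Restricted to
`A ⊆ M(A)` this says that `f ∘ Lₐ = J x_f`, where `J : X → A′` is the restriction map, so
`(ιa □ Ψ)(f) = Ψ (f ∘ Lₐ) = (Ψ ∘ J)(x_f) = f (μ.snd a)` for the multiplier `μ` corresponding to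
`Ψ ∘ J ∈ X′`. The same argument with `μ.fst a` and `Rₐ` handles `Ψ □ ιa`. -/

section

open Topology

theorem WeakDual.exists_eq_apply_of_continuous {𝕜 X : Type*} [NontriviallyNormedField 𝕜]
    [AddCommGroup X] [TopologicalSpace X] [Module 𝕜 X] (g : StrongDual 𝕜 X →ₗ[𝕜] 𝕜)
    (hg : Continuous fun w : WeakDual 𝕜 X => g (WeakDual.toStrongDual w)) :
    ∃ x : X, ∀ x' : StrongDual 𝕜 X, g x' = x' x := by
  obtain ⟨x, hx⟩ := LinearMap.dualEmbedding_surjective (topDualPairing 𝕜 X)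
    ⟨g ∘ₗ (WeakDual.toStrongDual : WeakDual 𝕜 X ≃ₗ[𝕜] _).toLinearMap, hg⟩
  exact ⟨x, fun x' => (DFunLike.congr_fun hx (StrongDual.toWeakDual x')).symm⟩

theorem Continuous.comp_rightInverse_of_induced {α β γ : Type*} [t : TopologicalSpace β]
    [TopologicalSpace γ] {e : α → β} {e' : β → α} {F : α → γ}
    (hF : Continuous[TopologicalSpace.induced e t, _] F) (he : Function.RightInverse e' e) :
    Continuous (F ∘ e') :=
  @Continuous.comp _ _ _ _ (TopologicalSpace.induced e t) _ _ _ hF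
    (continuous_induced_rng.2 (he.comp_eq_id ▸ continuous_id))

variable {𝕜 X M E Y : Type*} [NontriviallyNormedField 𝕜]
  [NormedAddCommGroup X] [NormedSpace 𝕜 X] [NormedAddCommGroup M] [NormedSpace 𝕜 M]
  [NormedAddCommGroup E] [NormedSpace 𝕜 E] [NormedAddCommGroup Y] [NormedSpace 𝕜 Y]

theorem exists_bidual_comp_eq_of_weakStar_weak_continuous
    (Φ : M ≃L[𝕜] StrongDual 𝕜 X) (s : M →ₗ[𝕜] Y)
    (hs : ∀ f : StrongDual 𝕜 Y, Continuous[TopologicalSpace.induced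
      (fun m => StrongDual.toWeakDual (Φ m)) inferInstance, inferInstance] (fun m => f (s m)))
    (j : E →L[𝕜] M) (T : E →L[𝕜] Y) (hT : ∀ e, T e = s (j e))
    (Ψ : StrongDual 𝕜 (StrongDual 𝕜 E)) :
    ∃ b : Y, ∀ f : StrongDual 𝕜 Y, Ψ (f.comp T) = f b := by
  let J : X →L[𝕜] StrongDual 𝕜 E := ((Φ : M →L[𝕜] StrongDual 𝕜 X).comp j).flip
  refine ⟨s (Φ.symm (Ψ.comp J)), fun f => ?_⟩
  have hfs : Continuous fun w : WeakDual 𝕜 X => f (s (Φ.symm (WeakDual.toStrongDual w))) :=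
    (hs f).comp_rightInverse_of_induced fun w => by simp
  obtain ⟨x, hx⟩ := WeakDual.exists_eq_apply_of_continuous
    ((f : Y →ₗ[𝕜] 𝕜) ∘ₗ s ∘ₗ (Φ.symm : StrongDual 𝕜 X →ₗ[𝕜] M)) hfs
  have hfT : f.comp T = J x := by
    ext e
    simpa [J, hT] using hx (Φ (j e))
  simpa [hfT, J] using (hx (Ψ.comp J)).symm

end

namespace DoubleCentralizer

variable {𝕜 A : Type*} [NontriviallyNormedField 𝕜] [NonUnitalNormedRing A] [NormedSpace 𝕜 A]
  [SMulCommClass 𝕜 A A] [IsScalarTower 𝕜 A A]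

variable (𝕜 A) in
noncomputable def coeCLM : A →L[𝕜] 𝓜(𝕜, A) :=
  LinearMap.mkContinuous
    { toFun := DoubleCentralizer.coe 𝕜
      map_add' := fun _ _ => ext _ _ _ _ <| Prod.ext (map_add _ _ _) (map_add _ _ _)
      map_smul' := fun _ _ => ext _ _ _ _ <| Prod.ext (map_smul _ _ _) (map_smul _ _ _) }
    1 fun a => by
      rw [one_mul, norm_def]
      refine norm_prod_le_iff.2 ⟨ContinuousLinearMap.opNorm_mul_apply_le 𝕜 A a, ?_⟩
      calc ‖(ContinuousLinearMap.mul 𝕜 A).flip a‖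
          ≤ ‖(ContinuousLinearMap.mul 𝕜 A).flip‖ * ‖a‖ := ContinuousLinearMap.le_opNorm _ a
        _ ≤ ‖a‖ := by
          rw [ContinuousLinearMap.opNorm_flip]
          exact mul_le_of_le_one_left (norm_nonneg a) (ContinuousLinearMap.opNorm_mul_le 𝕜 A)

def fstApplyₗ (a : A) : 𝓜(𝕜, A) →ₗ[𝕜] A where
  toFun μ := μ.fst a
  map_add' _ _ := rfl
  map_smul' _ _ := rfl

def sndApplyₗ (a : A) : 𝓜(𝕜, A) →ₗ[𝕜] A where
  toFun μ := μ.snd a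
  map_add' _ _ := rfl
  map_smul' _ _ := rfl

end DoubleCentralizer

theorem arensMul_inclusionInDoubleDual_left_apply {A : Type*} [NonUnitalNormedRing A]
    [NormedSpace ℂ A] [SMulCommClass ℂ A A] [IsScalarTower ℂ A A] (a : A)
    (Ψ : StrongDual ℂ (StrongDual ℂ A)) (f : StrongDual ℂ A) :
    arensMul A (NormedSpace.inclusionInDoubleDual ℂ A a) Ψ f =
      Ψ (f.comp (ContinuousLinearMap.mul ℂ A a)) :=
  rfl

theorem arensMul_inclusionInDoubleDual_right_apply {A : Type*} [NonUnitalNormedRing A]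
    [NormedSpace ℂ A] [SMulCommClass ℂ A A] [IsScalarTower ℂ A A] (a : A)
    (Ψ : StrongDual ℂ (StrongDual ℂ A)) (f : StrongDual ℂ A) :
    arensMul A Ψ (NormedSpace.inclusionInDoubleDual ℂ A a) f =
      Ψ (f.comp ((ContinuousLinearMap.mul ℂ A).flip a)) :=
  rfl

theorem compliant_image_ideal_in_bidual_general
    (X : Type*) [NormedAddCommGroup X] [NormedSpace ℂ X]
    (Φ : 𝓜(ℂ, A) ≃L[ℂ] StrongDual ℂ X)
    (τ : TopologicalSpace 𝓜(ℂ, A))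
    (hτ : τ = TopologicalSpace.induced
      (fun m => StrongDual.toWeakDual (Φ m)) inferInstance)
    (hcompl : ∀ (a : A) (f : StrongDual ℂ A),
      @Continuous _ _ τ _ (fun μ : 𝓜(ℂ, A) => f (μ.snd a)) ∧
      @Continuous _ _ τ _ (fun μ : 𝓜(ℂ, A) => f (μ.fst a))) :
    ∀ (a : A) (Ψ : StrongDual ℂ (StrongDual ℂ A)),
      (∃ b : A, arensMul A (NormedSpace.inclusionInDoubleDual ℂ A a) Ψ =
        NormedSpace.inclusionInDoubleDual ℂ A b) ∧
      (∃ b : A, arensMul A Ψ (NormedSpace.inclusionInDoubleDual ℂ A a) =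
        NormedSpace.inclusionInDoubleDual ℂ A b) := by
  subst hτ
  intro a Ψ
  constructor
  · obtain ⟨b, hb⟩ := exists_bidual_comp_eq_of_weakStar_weak_continuous Φ
      (DoubleCentralizer.sndApplyₗ a) (fun f => (hcompl a f).1) (DoubleCentralizer.coeCLM ℂ A)
      (ContinuousLinearMap.mul ℂ A a) (fun _ => rfl) Ψ
    exact ⟨b, ContinuousLinearMap.ext fun f =>
      (arensMul_inclusionInDoubleDual_left_apply a Ψ f).trans (hb f)⟩
  · obtain ⟨b, hb⟩ := exists_bidual_comp_eq_of_weakStar_weak_continuous Φ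
      (DoubleCentralizer.fstApplyₗ a) (fun f => (hcompl a f).2) (DoubleCentralizer.coeCLM ℂ A)
      ((ContinuousLinearMap.mul ℂ A).flip a) (fun _ => rfl) Ψ
    exact ⟨b, ContinuousLinearMap.ext fun f =>
      (arensMul_inclusionInDoubleDual_right_apply a Ψ f).trans (hb f)⟩

/-- Let `A` be a compliant Banach algebra (faithful, `M(A) = 𝓜(ℂ, A)` a dual
Banach algebra, and for each `a ∈ A` the maps `μ ↦ μa` and `μ ↦ aμ` from `M(A)` to `A`
weak*-to-weak continuous). Then the canonical image of `A` in its bidual `A″` is a two-sided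
ideal for the first Arens product. -/
theorem compliant_image_ideal_in_bidual
    (hfaith : ∀ x : A, ((∀ a : A, a * x = 0) → x = 0) ∧ ((∀ a : A, x * a = 0) → x = 0))
    (X : Type*) [NormedAddCommGroup X] [NormedSpace ℂ X]
    (Φ : 𝓜(ℂ, A) ≃L[ℂ] StrongDual ℂ X)
    (τ : TopologicalSpace 𝓜(ℂ, A))
    (hτ : τ = TopologicalSpace.induced
      (fun m => StrongDual.toWeakDual (Φ m)) inferInstance)
    (hsep : ∀ m : 𝓜(ℂ, A), @Continuous _ _ τ τ (fun x => m * x) ∧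
      @Continuous _ _ τ τ (fun x => x * m))
    (hcompl : ∀ (a : A) (f : StrongDual ℂ A),
      @Continuous _ _ τ _ (fun μ : 𝓜(ℂ, A) => f (μ.snd a)) ∧
      @Continuous _ _ τ _ (fun μ : 𝓜(ℂ, A) => f (μ.fst a))) :
    ∀ (a : A) (Ψ : StrongDual ℂ (StrongDual ℂ A)),
      (∃ b : A, arensMul A (NormedSpace.inclusionInDoubleDual ℂ A a) Ψ =
        NormedSpace.inclusionInDoubleDual ℂ A b) ∧
      (∃ b : A, arensMul A Ψ (NormedSpace.inclusionInDoubleDual ℂ A a) =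
        NormedSpace.inclusionInDoubleDual ℂ A b) :=
  compliant_image_ideal_in_bidual_general X Φ τ hτ hcompl
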